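/- Local parameterization of the 1-shock polar by shock speed: let γ>1, let U_b=(u_b,v_b,p_b,ρ_b) and U₁=(u₁,0,p₁,ρ₁) be states with ρ_b,ρ₁>0, p_b,p₁>0, u₁>c₁ where c₁=√(γp₁/ρ₁), and let σ₁₀ satisfy λ₁(U₁) < σ₁₀ < 0 (λ₁(U₁) = −c₁/√(u₁²−c₁²)) and the Rankine–Hugoniot conditions σ₁₀·(W(U₁)−W(U_b)) = H(U₁)−H(U_b). Then there exist open neighborhoods N₁ of σ₁₀ in ℝ, N₂ of U_b in ℝ⁴, N₃ of U₁ in ℝ⁴, and a continuously differentiable map G₁ : N₁×N₂ → N₃ with G₁(σ₁₀,U_b)=U₁ such that for all (σ,U₀) ∈ N₁×N₂ and all U ∈ N₃: σ·(W(U)−W(U₀)) = H(U)−H(U₀) if and only if U = G₁(σ,U₀). -/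

import Mathlib

/-!
The Rankine–Hugoniot defect `(σ, U₀, U) ↦ σ (W(U) − W(U₀)) − (H(U) − H(U₀))` is `C¹` where the
densities are nonzero and vanishes at `(σ₁₀, U_b, U₁)`, so the implicit function theorem applies
once its partial Jacobian in `U` at `U₁ = (u₁, 0, p₁, ρ₁)`, namely `σ₁₀ ∇W − ∇H`, is invertible.
Its determinant is
`σ² ρ u² (γ p − σ² (ρ u² − γ p)) / (γ − 1) = σ² ρ² u² (c² − σ² (u² − c²)) / (γ − 1)`,
which vanishes only at the characteristic slopes `0` and `±c / √(u² − c²)`; the condition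
`λ₁(U₁) < σ₁₀ < 0` keeps `σ₁₀` strictly away from all of them.
-/

noncomputable section

/-- The flux map `W` of the 2-D steady full Euler system,
with state `U = (u, v, p, ρ)`. -/
def Wf (γ : ℝ) (U : Fin 4 → ℝ) : Fin 4 → ℝ :=
  ![U 3 * U 0,
    U 3 * U 0 ^ 2 + U 2,
    U 3 * U 0 * U 1,
    U 3 * U 0 * (γ * U 2 / ((γ - 1) * U 3) + (U 0 ^ 2 + U 1 ^ 2) / 2)]

/-- The flux map `H` of the 2-D steady full Euler system. -/
def Hf (γ : ℝ) (U : Fin 4 → ℝ) : Fin 4 → ℝ :=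
  ![U 3 * U 1,
    U 3 * U 0 * U 1,
    U 3 * U 1 ^ 2 + U 2,
    U 3 * U 1 * (γ * U 2 / ((γ - 1) * U 3) + (U 0 ^ 2 + U 1 ^ 2) / 2)]

open Topology Set

section ImplicitFunction

variable {𝕜 : Type*} [RCLike 𝕜]
  {E₁ : Type*} [NormedAddCommGroup E₁] [NormedSpace 𝕜 E₁] [CompleteSpace E₁]
  {E₂ : Type*} [NormedAddCommGroup E₂] [NormedSpace 𝕜 E₂] [CompleteSpace E₂]
  {F : Type*} [NormedAddCommGroup F] [NormedSpace 𝕜 F] [CompleteSpace F]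

theorem ContDiffAt.exists_isOpen_implicitFunction {n : ℕ} {f : E₁ × E₂ → F} {u : E₁ × E₂}
    (hf : ContDiffAt 𝕜 n f u) (hn : n ≠ 0)
    (hf₂ : (fderiv 𝕜 f u ∘L .inr 𝕜 E₁ E₂).IsInvertible) :
    ∃ V₁ : Set E₁, ∃ V₂ : Set E₂, IsOpen V₁ ∧ IsOpen V₂ ∧ u.1 ∈ V₁ ∧ u.2 ∈ V₂ ∧
      ∃ ψ : E₁ → E₂, ContDiffOn 𝕜 n ψ V₁ ∧ ψ u.1 = u.2 ∧ MapsTo ψ V₁ V₂ ∧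
        ∀ x ∈ V₁, ∀ y ∈ V₂, f (x, y) = f u ↔ y = ψ x := by
  have hn' : (n : WithTop ℕ∞) ≠ 0 := by exact_mod_cast hn
  set ψ := hf.implicitFunction hn' hf₂
  obtain ⟨A, B, hA, huA, hB, huB, hAB⟩ :=
    mem_nhds_prod_iff'.mp (hf.eventually_apply_eq_iff_implicitFunction hn' hf₂)
  have hψ : ∀ᶠ x in 𝓝 u.1, ContDiffAt 𝕜 n ψ x ∧ ψ x ∈ B ∧ x ∈ A := by
    have hψ₁ := hf.contDiffAt_implicitFunction hn' hf₂
    refine (hψ₁.eventually (by simp)).and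
      ((hψ₁.continuousAt.tendsto.eventually_mem ?_).and (hA.mem_nhds huA))
    rw [hf.implicitFunction_apply_self]
    exact hB.mem_nhds huB
  obtain ⟨V₁, hV, hV₁, hu₁⟩ := mem_nhds_iff.mp hψ
  refine ⟨V₁, B, hV₁, hB, hu₁, huB, ψ, fun x hx => (hV hx).1.contDiffWithinAt,
    hf.implicitFunction_apply_self hn' hf₂, fun x hx => (hV hx).2.1, fun x hx y hy => ?_⟩
  exact (hAB ⟨(hV hx).2.2, hy⟩).trans eq_comm

end ImplicitFunction

theorem Matrix.isInvertible_toLin'_toContinuousLinearMap {𝕜 ι : Type*} [NontriviallyNormedField 𝕜]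
    [CompleteSpace 𝕜] [Fintype ι] [DecidableEq ι] {M : Matrix ι ι 𝕜} (hM : M.det ≠ 0) :
    (Matrix.toLin' M).toContinuousLinearMap.IsInvertible := by
  rw [← LinearMap.det_toLin', ← LinearMap.det_toContinuousLinearMap] at hM
  exact ⟨_, ContinuousLinearMap.coe_toContinuousLinearEquivOfDetNeZero _ hM⟩

theorem sq_mul_sub_sq_lt_sq {c u σ : ℝ} (hc : 0 ≤ c) (hcu : c < u)
    (hσ : -c / √(u ^ 2 - c ^ 2) < σ) (hσ₀ : σ < 0) : σ ^ 2 * (u ^ 2 - c ^ 2) < c ^ 2 := by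
  have hs : 0 < √(u ^ 2 - c ^ 2) := Real.sqrt_pos.mpr (by nlinarith)
  have hlow : -c < σ * √(u ^ 2 - c ^ 2) := (div_lt_iff₀ hs).mp hσ
  have hneg : σ * √(u ^ 2 - c ^ 2) < 0 := mul_neg_of_neg_of_pos hσ₀ hs
  calc σ ^ 2 * (u ^ 2 - c ^ 2) = (σ * √(u ^ 2 - c ^ 2)) ^ 2 := by
        rw [mul_pow, Real.sq_sqrt (by nlinarith)]
    _ < c ^ 2 := by nlinarith

/-- `σ • W − H` with the enthalpy flux `ρ u h` written as `γ u p / (γ − 1)`. -/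
def rhFlux (γ σ : ℝ) (U : Fin 4 → ℝ) : Fin 4 → ℝ :=
  ![σ * (U 3 * U 0) - U 3 * U 1,
    σ * (U 3 * U 0 ^ 2 + U 2) - U 3 * U 0 * U 1,
    σ * (U 3 * U 0 * U 1) - (U 3 * U 1 ^ 2 + U 2),
    σ * (γ / (γ - 1) * (U 0 * U 2) + U 3 * U 0 * ((U 0 ^ 2 + U 1 ^ 2) * 2⁻¹))
      - (γ / (γ - 1) * (U 1 * U 2) + U 3 * U 1 * ((U 0 ^ 2 + U 1 ^ 2) * 2⁻¹))]

theorem smul_Wf_sub_Hf {U : Fin 4 → ℝ} (hU : U 3 ≠ 0) (γ σ : ℝ) :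
    σ • Wf γ U - Hf γ U = rhFlux γ σ U := by
  have key (a : ℝ) : U 3 * a * (γ * U 2 / ((γ - 1) * U 3)) = γ / (γ - 1) * (a * U 2) := by
    rw [mul_div_mul_comm]
    field_simp
  ext i
  fin_cases i
  · simp [Wf, Hf, rhFlux]
  · simp [Wf, Hf, rhFlux]
  · simp [Wf, Hf, rhFlux]
  · simp only [Wf, Hf, rhFlux, Fin.isValue, Fin.reduceFinMk, Pi.sub_apply, Matrix.smul_cons,
      smul_eq_mul, Matrix.smul_empty, Matrix.cons_val]
    linear_combination σ * key (U 0) - key (U 1)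

def rhJacobian (γ σ u p ρ : ℝ) : Matrix (Fin 4) (Fin 4) ℝ :=
  !![σ * ρ, -ρ, 0, σ * u;
    2 * σ * ρ * u, -(ρ * u), σ, σ * u ^ 2;
    0, σ * ρ * u, -1, 0;
    σ * (γ / (γ - 1) * p + 3 / 2 * (ρ * u ^ 2)), -(γ / (γ - 1) * p + ρ * u ^ 2 / 2),
      σ * u * (γ / (γ - 1)), σ * u ^ 3 / 2]

theorem hasFDerivAt_rhFlux (γ σ u p ρ : ℝ) :
    HasFDerivAt (rhFlux γ σ) (Matrix.toLin' (rhJacobian γ σ u p ρ)).toContinuousLinearMap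
      ![u, 0, p, ρ] := by
  refine hasFDerivAt_pi'' fun i => ?_
  have h0 := hasFDerivAt_apply (𝕜 := ℝ) 0 ![u, 0, p, ρ]
  have h1 := hasFDerivAt_apply (𝕜 := ℝ) 1 ![u, 0, p, ρ]
  have h2 := hasFDerivAt_apply (𝕜 := ℝ) 2 ![u, 0, p, ρ]
  have h3 := hasFDerivAt_apply (𝕜 := ℝ) 3 ![u, 0, p, ρ]
  have hq := ((h0.pow 2).add (h1.pow 2)).mul_const (2⁻¹ : ℝ)
  fin_cases i <;> [
    refine (((h3.mul h0).const_mul σ).sub (h3.mul h1)).congr_fderiv ?_;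
    refine ((((h3.mul (h0.pow 2)).add h2).const_mul σ).sub ((h3.mul h0).mul h1)).congr_fderiv ?_;
    refine ((((h3.mul h0).mul h1).const_mul σ).sub ((h3.mul (h1.pow 2)).add h2)).congr_fderiv ?_;
    refine (((((h0.mul h2).const_mul (γ / (γ - 1))).add ((h3.mul h0).mul hq)).const_mul σ).sub
      (((h1.mul h2).const_mul (γ / (γ - 1))).add ((h3.mul h1).mul hq))).congr_fderiv ?_] <;>
  · ext δ
    simp only [rhJacobian, Fin.isValue, Fin.zero_eta, Fin.mk_one, Fin.reduceFinMk,
      Matrix.cons_val, Matrix.cons_val_zero, Matrix.cons_val_one, Pi.mul_apply, Pi.add_apply,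
      ContinuousLinearMap.comp_apply, LinearMap.coe_toContinuousLinearMap',
      Matrix.toLin'_apply, Matrix.cons_mulVec, Matrix.empty_mulVec, dotProduct, Fin.sum_univ_four,
      ContinuousLinearMap.proj_apply, sub_apply, add_apply, smul_apply, smul_eq_mul]
    ring

theorem det_rhJacobian {γ : ℝ} (hγ : γ ≠ 1) (σ u p ρ : ℝ) :
    (rhJacobian γ σ u p ρ).det
      = σ ^ 2 * ρ * u ^ 2 * (γ * p - σ ^ 2 * (ρ * u ^ 2 - γ * p)) / (γ - 1) := by
  have : γ - 1 ≠ 0 := sub_ne_zero.mpr hγ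
  rw [rhJacobian, Matrix.det_succ_row_zero]
  simp [Fin.sum_univ_succ, Matrix.det_fin_three, Fin.succAbove]
  field_simp
  ring

theorem det_rhJacobian_ne_zero {γ σ u p ρ : ℝ} (hγ : γ ≠ 1) (hσ : σ ≠ 0) (hu : u ≠ 0)
    (hρ : ρ ≠ 0) (hlax : σ ^ 2 * (ρ * u ^ 2 - γ * p) < γ * p) :
    (rhJacobian γ σ u p ρ).det ≠ 0 := by
  have : γ * p - σ ^ 2 * (ρ * u ^ 2 - γ * p) ≠ 0 := by linarith
  rw [det_rhJacobian hγ]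
  simp [hσ, hu, hρ, this, sub_ne_zero.mpr hγ]

theorem contDiffAt_Wf {γ : ℝ} (hγ : γ ≠ 1) {U : Fin 4 → ℝ} (hU : U 3 ≠ 0) {n : WithTop ℕ∞} :
    ContDiffAt ℝ n (Wf γ) U := by
  have : (γ - 1) * U 3 ≠ 0 := mul_ne_zero (sub_ne_zero.mpr hγ) hU
  refine contDiffAt_pi.mpr fun i => ?_
  fin_cases i <;> simp only [Wf, Fin.isValue, Fin.zero_eta, Fin.mk_one, Fin.reduceFinMk,
    Matrix.cons_val, Matrix.cons_val_zero, Matrix.cons_val_one] <;> fun_prop (disch := assumption)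

theorem contDiffAt_Hf {γ : ℝ} (hγ : γ ≠ 1) {U : Fin 4 → ℝ} (hU : U 3 ≠ 0) {n : WithTop ℕ∞} :
    ContDiffAt ℝ n (Hf γ) U := by
  have : (γ - 1) * U 3 ≠ 0 := mul_ne_zero (sub_ne_zero.mpr hγ) hU
  refine contDiffAt_pi.mpr fun i => ?_
  fin_cases i <;> simp only [Hf, Fin.isValue, Fin.zero_eta, Fin.mk_one, Fin.reduceFinMk,
    Matrix.cons_val, Matrix.cons_val_zero, Matrix.cons_val_one] <;> fun_prop (disch := assumption)

def rhDefect (γ : ℝ) (v : (ℝ × (Fin 4 → ℝ)) × (Fin 4 → ℝ)) : Fin 4 → ℝ :=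
  v.1.1 • (Wf γ v.2 - Wf γ v.1.2) - (Hf γ v.2 - Hf γ v.1.2)

theorem contDiffAt_rhDefect {γ : ℝ} (hγ : γ ≠ 1) {v : (ℝ × (Fin 4 → ℝ)) × (Fin 4 → ℝ)}
    (h₀ : v.1.2 3 ≠ 0) (h : v.2 3 ≠ 0) {n : WithTop ℕ∞} : ContDiffAt ℝ n (rhDefect γ) v := by
  have := contDiffAt_Wf (n := n) hγ h
  have := contDiffAt_Wf (n := n) hγ h₀
  have := contDiffAt_Hf (n := n) hγ h
  have := contDiffAt_Hf (n := n) hγ h₀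
  unfold rhDefect
  fun_prop

theorem fderiv_rhDefect_comp_inr {γ : ℝ} (hγ : γ ≠ 1) (σ : ℝ) {U₀ : Fin 4 → ℝ} (h₀ : U₀ 3 ≠ 0)
    {u p ρ : ℝ} (hρ : ρ ≠ 0) :
    fderiv ℝ (rhDefect γ) ((σ, U₀), ![u, 0, p, ρ]) ∘L .inr ℝ (ℝ × (Fin 4 → ℝ)) (Fin 4 → ℝ)
      = (Matrix.toLin' (rhJacobian γ σ u p ρ)).toContinuousLinearMap := by
  have hslice := ((contDiffAt_rhDefect (n := 1) hγ h₀ hρ).differentiableAt one_ne_zero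
    |>.hasFDerivAt).comp _ (hasFDerivAt_prodMk_right (σ, U₀) ![u, 0, p, ρ])
  refine hslice.unique <| ((hasFDerivAt_rhFlux γ σ u p ρ).sub_const
    (σ • Wf γ U₀ - Hf γ U₀)).congr_of_eventuallyEq ?_
  have hρU : ∀ᶠ U in 𝓝 ![u, 0, p, ρ], U 3 ≠ 0 :=
    (continuous_apply 3).continuousAt.eventually_ne hρ
  filter_upwards [hρU] with U hU
  simp only [Function.comp_apply, rhDefect, ← smul_Wf_sub_Hf hU]
  module

theorem shock1_polar_parameterization_general
    (γ u_b v_b p_b ρ_b u₁ p₁ ρ₁ σ₁₀ : ℝ) (hγ : 1 < γ)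
    (hρb : 0 < ρ_b) (hρ1 : 0 < ρ₁) (hp1 : 0 < p₁)
    (c₁ : ℝ) (hc₁ : c₁ = Real.sqrt (γ * p₁ / ρ₁)) (hsup : c₁ < u₁)
    (Ub U₁ : Fin 4 → ℝ) (hUb : Ub = ![u_b, v_b, p_b, ρ_b]) (hU₁ : U₁ = ![u₁, 0, p₁, ρ₁])
    (hσ1 : -c₁ / Real.sqrt (u₁ ^ 2 - c₁ ^ 2) < σ₁₀) (hσ2 : σ₁₀ < 0)
    (hRH : σ₁₀ • (Wf γ U₁ - Wf γ Ub) = Hf γ U₁ - Hf γ Ub) :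
    ∃ (N₁ : Set ℝ) (N₂ N₃ : Set (Fin 4 → ℝ)),
      IsOpen N₁ ∧ IsOpen N₂ ∧ IsOpen N₃ ∧
      σ₁₀ ∈ N₁ ∧ Ub ∈ N₂ ∧ U₁ ∈ N₃ ∧
      ∃ G₁ : ℝ → (Fin 4 → ℝ) → (Fin 4 → ℝ),
        ContDiffOn ℝ 1 (fun q : ℝ × (Fin 4 → ℝ) => G₁ q.1 q.2) (N₁ ×ˢ N₂) ∧
        G₁ σ₁₀ Ub = U₁ ∧
        (∀ σ ∈ N₁, ∀ U₀ ∈ N₂, G₁ σ U₀ ∈ N₃) ∧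
        (∀ σ ∈ N₁, ∀ U₀ ∈ N₂, ∀ U ∈ N₃,
          (σ • (Wf γ U - Wf γ U₀) = Hf γ U - Hf γ U₀ ↔ U = G₁ σ U₀)) := by
  have hγ₁ : γ ≠ 1 := hγ.ne'
  have hUb3 : Ub 3 ≠ 0 := by rw [hUb]; exact hρb.ne'
  have hc₁sq : c₁ ^ 2 = γ * p₁ / ρ₁ := by
    rw [hc₁, Real.sq_sqrt (div_nonneg (mul_nonneg (by linarith) hp1.le) hρ1.le)]
  have hc₁₀ : 0 ≤ c₁ := hc₁ ▸ Real.sqrt_nonneg _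
  have hlax := sq_mul_sub_sq_lt_sq hc₁₀ hsup hσ1 hσ2
  have hdet : (rhJacobian γ σ₁₀ u₁ p₁ ρ₁).det ≠ 0 := by
    refine det_rhJacobian_ne_zero hγ₁ hσ2.ne (by linarith) hρ1.ne' ?_
    have hγp : γ * p₁ = ρ₁ * c₁ ^ 2 := by rw [hc₁sq]; field_simp
    rw [hγp]
    nlinarith [mul_lt_mul_of_pos_left hlax hρ1]
  subst hU₁
  obtain ⟨V, N₃, hV, hN₃, hσUbV, hU₁N₃, ψ, hψ, hψ₀, hψN₃, hψiff⟩ :=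
    (contDiffAt_rhDefect (n := 1) hγ₁ hUb3 hρ1.ne').exists_isOpen_implicitFunction one_ne_zero
      (by rw [fderiv_rhDefect_comp_inr hγ₁ σ₁₀ hUb3 hρ1.ne']
          exact Matrix.isInvertible_toLin'_toContinuousLinearMap hdet)
  obtain ⟨N₁, N₂, hN₁, hN₂, hσ₁₀N₁, hUbN₂, hN⟩ := isOpen_prod_iff.mp hV σ₁₀ Ub hσUbV
  have hzero : rhDefect γ ((σ₁₀, Ub), ![u₁, 0, p₁, ρ₁]) = 0 := sub_eq_zero.mpr hRH
  refine ⟨N₁, N₂, N₃, hN₁, hN₂, hN₃, hσ₁₀N₁, hUbN₂, hU₁N₃, fun σ U₀ => ψ (σ, U₀), hψ.mono hN, hψ₀,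
    fun σ hσ U₀ hU₀ => hψN₃ (hN ⟨hσ, hU₀⟩), fun σ hσ U₀ hU₀ U hU => ?_⟩
  rw [← hψiff _ (hN ⟨hσ, hU₀⟩) U hU, hzero, rhDefect, sub_eq_zero]

/-- Local parameterization of the 1-shock polar by shock speed: near a strong 1-shock
`(σ₁₀, U_b, U₁)`, the Rankine–Hugoniot conditions are locally uniquely solvable for the
above state `U` as a `C¹` function `G₁(σ, U₀)` of the speed and the below state. -/
theorem shock1_polar_parameterization
    (γ u_b v_b p_b ρ_b u₁ p₁ ρ₁ σ₁₀ : ℝ) (hγ : 1 < γ)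
    (hρb : 0 < ρ_b) (hρ1 : 0 < ρ₁) (hpb : 0 < p_b) (hp1 : 0 < p₁)
    (c₁ : ℝ) (hc₁ : c₁ = Real.sqrt (γ * p₁ / ρ₁)) (hsup : c₁ < u₁)
    (Ub U₁ : Fin 4 → ℝ) (hUb : Ub = ![u_b, v_b, p_b, ρ_b]) (hU₁ : U₁ = ![u₁, 0, p₁, ρ₁])
    (hσ1 : -c₁ / Real.sqrt (u₁ ^ 2 - c₁ ^ 2) < σ₁₀) (hσ2 : σ₁₀ < 0)
    (hRH : σ₁₀ • (Wf γ U₁ - Wf γ Ub) = Hf γ U₁ - Hf γ Ub) :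
    ∃ (N₁ : Set ℝ) (N₂ N₃ : Set (Fin 4 → ℝ)),
      IsOpen N₁ ∧ IsOpen N₂ ∧ IsOpen N₃ ∧
      σ₁₀ ∈ N₁ ∧ Ub ∈ N₂ ∧ U₁ ∈ N₃ ∧
      ∃ G₁ : ℝ → (Fin 4 → ℝ) → (Fin 4 → ℝ),
        ContDiffOn ℝ 1 (fun q : ℝ × (Fin 4 → ℝ) => G₁ q.1 q.2) (N₁ ×ˢ N₂) ∧
        G₁ σ₁₀ Ub = U₁ ∧
        (∀ σ ∈ N₁, ∀ U₀ ∈ N₂, G₁ σ U₀ ∈ N₃) ∧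
        (∀ σ ∈ N₁, ∀ U₀ ∈ N₂, ∀ U ∈ N₃,
          (σ • (Wf γ U - Wf γ U₀) = Hf γ U - Hf γ U₀ ↔ U = G₁ σ U₀)) :=
  shock1_polar_parameterization_general γ u_b v_b p_b ρ_b u₁ p₁ ρ₁ σ₁₀ hγ hρb hρ1 hp1 c₁ hc₁ hsup Ub
    U₁ hUb hU₁ hσ1 hσ2 hRH
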